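/- The Fourier coefficient of p = c·exp(-φ) ∈ B² with respect to the n-th exponentiated Hermite basis vector under standard normal measure is αₙ = ⟨hₙ, p⟩ = (1/√(n!))·E_ν[φ^{(n)}(ξ)], the scaled expectation of the n-th derivative of φ. -/

import Mathlib

open MeasureTheory Real ProbabilityTheory

/-- The Bayes-space inner product `⟨p₁,p₂⟩ = E_ν[ln p₁ ln p₂] − E_ν[ln p₁]E_ν[ln p₂]`. -/
noncomputable def bip (ν : Measure ℝ) (p q : ℝ → ℝ) : ℝ :=
  (∫ x, Real.log (p x) * Real.log (q x) ∂ν) -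
    (∫ x, Real.log (p x) ∂ν) * (∫ x, Real.log (q x) ∂ν)

/-- The exponentiated normalized probabilist's Hermite basis vector
`hₙ(ξ) = exp (-Hₙ(ξ)/√(n!))`. -/
noncomputable def hermiteBasis (n : ℕ) (x : ℝ) : ℝ :=
  Real.exp (-(Polynomial.aeval x (Polynomial.hermite n) / Real.sqrt (Nat.factorial n)))

/-!
Write `ρ` for the standard normal density, so that `ρ' = -x ρ`. Stein's identity
`E_ν[x f] = E_ν[f']` is the integral of `(ρ f)' = ρ f' - x ρ f`, and together with the recurrence
`Hₘ₊₁ = x Hₘ - Hₘ'` it gives `E_ν[Hₘ φ⁽ʲ⁾] = E_ν[φ⁽ᵐ⁺ʲ⁾]` by induction on `m`. Since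
`ln hₙ = -Hₙ/√(n!)` and `ln p = ln c - φ`, the Bayes inner product reduces to `E_ν[Hₙ φ]/√(n!)`,
the constant `ln c` dropping out because `E_ν[Hₙ] = 0` for `n ≥ 1`. The integrability of all the
intermediate products `Hₘ φ⁽ʲ⁾` comes out of the same induction: `f' ∈ L¹(ν)` alone forces
`x f ∈ L¹(ν)`, by the bound `|f(x)| ≤ |f(0)| + |∫₀ˣ |f'||`.
-/

open Set Filter Polynomial
open scoped NNReal

local notation "ρ" => gaussianPDFReal 0 1

lemma integrable_gaussianReal_iff {E : Type*} [NormedAddCommGroup E] [NormedSpace ℝ E]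
    {μ : ℝ} {v : ℝ≥0} (hv : v ≠ 0) {f : ℝ → E} :
    Integrable f (gaussianReal μ v) ↔ Integrable (fun x => gaussianPDFReal μ v x • f x) := by
  rw [gaussianReal_of_var_ne_zero μ hv, integrable_withDensity_iff_integrable_smul'
    (measurable_gaussianPDF μ v) (ae_of_all _ fun _ => gaussianPDF_lt_top)]
  simp only [toReal_gaussianPDF]

lemma hasDerivAt_gaussianPDFReal (μ : ℝ) (v : ℝ≥0) (x : ℝ) :
    HasDerivAt (gaussianPDFReal μ v) (-((x - μ) / v) * gaussianPDFReal μ v x) x := by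
  have h : HasDerivAt (fun y => -(y - μ) ^ 2 / (2 * v)) (-((x - μ) / v)) x := by
    have := (((hasDerivAt_id x).sub_const μ).pow 2).neg.div_const (2 * (v : ℝ))
    refine this.congr_deriv ?_
    by_cases hv : (v : ℝ) = 0
    · simp [hv]
    · simp only [id]; field_simp; ring
  rw [gaussianPDFReal_def]
  refine (h.exp.const_mul (√(2 * π * v))⁻¹).congr_deriv ?_
  ring

lemma continuous_gaussianPDFReal (μ : ℝ) (v : ℝ≥0) : Continuous (gaussianPDFReal μ v) :=
  continuous_iff_continuousAt.2 fun x => (hasDerivAt_gaussianPDFReal μ v x).continuousAt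

lemma hasDerivAt_gaussianPDFReal_zero_one (x : ℝ) :
    HasDerivAt (gaussianPDFReal 0 1) (-x * gaussianPDFReal 0 1 x) x := by
  simpa using hasDerivAt_gaussianPDFReal 0 1 x

lemma mul_intervalIntegral_nonneg {f : ℝ → ℝ} (hf : ∀ x, 0 ≤ f x) (x : ℝ) :
    0 ≤ x * ∫ t in 0..x, f t := by
  rcases le_total 0 x with hx | hx
  · exact mul_nonneg hx (intervalIntegral.integral_nonneg hx fun t _ => hf t)
  · refine mul_nonneg_of_nonpos_of_nonpos hx ?_
    rw [intervalIntegral.integral_symm]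
    exact neg_nonpos.2 (intervalIntegral.integral_nonneg hx fun t _ => hf t)

/-- `x ρ(x) ∫₀ˣ v` is `ρ v - (ρ ∫₀ˣ v)'`, and the boundary term has the sign that helps. -/
lemma integrable_mul_gaussianPDFReal_mul_intervalIntegral {v : ℝ → ℝ} (hv : Continuous v)
    (hv0 : ∀ x, 0 ≤ v x) (hvi : Integrable (fun x => ρ x * v x)) :
    Integrable (fun x => x * ρ x * ∫ t in 0..x, v t) := by
  set A := fun x => ∫ t in 0..x, v t
  have hA : ∀ x, HasDerivAt A (v x) x := fun x => (hv.integral_hasStrictDerivAt 0 x).hasDerivAt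
  have hρA : ∀ x, HasDerivAt (fun y => ρ y * A y) (ρ x * v x - x * ρ x * A x) x := fun x =>
    ((hasDerivAt_gaussianPDFReal_zero_one x).mul (hA x)).congr_deriv (by ring)
  have hnorm : ∀ x, ‖x * ρ x * A x‖ = x * ρ x * A x := fun x => by
    rw [Real.norm_eq_abs, abs_of_nonneg]
    rw [mul_right_comm]
    exact mul_nonneg (mul_intervalIntegral_nonneg hv0 x) (gaussianPDFReal_nonneg 0 1 x)
  have hcont : Continuous (fun x => x * ρ x * A x) :=
    (continuous_id.mul (continuous_gaussianPDFReal 0 1)).mul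
      (continuous_iff_continuousAt.2 fun x => (hA x).continuousAt)
  refine integrable_of_intervalIntegral_norm_bounded (∫ x, ρ x * v x)
    (fun R => hcont.integrableOn_Icc.mono_set Ioc_subset_Icc_self) tendsto_neg_atTop_atBot
    tendsto_id ?_
  filter_upwards [eventually_ge_atTop 0] with R hR
  have hρv : IntervalIntegrable (fun x => ρ x * v x) volume (-R) R := hvi.intervalIntegrable
  have hftc := intervalIntegral.integral_eq_sub_of_hasDerivAt (fun x _ => hρA x)
    (hρv.sub (hcont.intervalIntegrable _ _))
  rw [intervalIntegral.integral_sub hρv (hcont.intervalIntegrable _ _)] at hftc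
  show ∫ x in -R..R, ‖x * ρ x * A x‖ ≤ _
  simp only [hnorm]
  have hρv_le : ∫ x in -R..R, ρ x * v x ≤ ∫ x, ρ x * v x := by
    rw [intervalIntegral.integral_of_le (by linarith)]
    exact setIntegral_le_integral hvi
      (ae_of_all _ fun x => mul_nonneg (gaussianPDFReal_nonneg 0 1 x) (hv0 x))
  have hAR : 0 ≤ A R := intervalIntegral.integral_nonneg hR fun t _ => hv0 t
  have hAnegR : A (-R) ≤ 0 := by
    rw [show A (-R) = _ from intervalIntegral.integral_symm _ _, neg_nonpos]
    exact intervalIntegral.integral_nonneg (by linarith) fun t _ => hv0 t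
  have hρR := gaussianPDFReal_nonneg 0 1 R
  have hρnegR := gaussianPDFReal_nonneg 0 1 (-R)
  linarith [mul_nonneg hρR hAR, mul_nonpos_of_nonneg_of_nonpos hρnegR hAnegR]

/-- From `f(x) = f(0) + ∫₀ˣ f'`: `|x f(x)| ≤ |f(0)| |x| + x ∫₀ˣ |f'|`. -/
theorem integrable_id_mul_gaussianReal {f f' : ℝ → ℝ} (hf : ∀ x, HasDerivAt f (f' x) x)
    (hf' : Continuous f') (hf'i : Integrable f' (gaussianReal 0 1)) :
    Integrable (fun x => x * f x) (gaussianReal 0 1) := by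
  rw [integrable_gaussianReal_iff one_ne_zero] at hf'i ⊢
  have hid : Integrable (fun x => ρ x * x) := by
    simpa using (integrable_gaussianReal_iff (μ := 0) one_ne_zero).1
      ((memLp_id_gaussianReal 1).integrable le_rfl)
  have hmajor : Integrable (fun x => |f 0| * ‖ρ x * x‖ + x * ρ x * ∫ t in 0..x, |f' t|) :=
    (hid.norm.const_mul _).add <| integrable_mul_gaussianPDFReal_mul_intervalIntegral hf'.abs
      (fun x => abs_nonneg _) (by simpa [abs_of_nonneg (gaussianPDFReal_nonneg 0 1 _)]
        using hf'i.norm)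
  have hfc : Continuous f := continuous_iff_continuousAt.2 fun x => (hf x).continuousAt
  refine hmajor.mono' (((continuous_gaussianPDFReal 0 1).mul
    (continuous_id.mul hfc)).aestronglyMeasurable) (ae_of_all _ fun x => ?_)
  have hftc : f x = f 0 + ∫ t in 0..x, f' t := by
    rw [intervalIntegral.integral_eq_sub_of_hasDerivAt (fun t _ => hf t)
      (hf'.intervalIntegrable _ _)]
    ring
  have hρ := gaussianPDFReal_nonneg 0 1 x
  calc ‖ρ x • (x * f x)‖ = ρ x * |x| * |f 0 + ∫ t in 0..x, f' t| := by
        rw [hftc, smul_eq_mul, norm_mul, norm_mul, Real.norm_of_nonneg hρ, mul_assoc]; rfl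
    _ ≤ ρ x * |x| * (|f 0| + |(∫ t in 0..x, |f' t|)|) := by
        gcongr
        refine (abs_add_le _ _).trans (add_le_add_right ?_ _)
        simpa using intervalIntegral.norm_integral_le_abs_integral_norm (f := f') (a := 0) (b := x)
    _ = |f 0| * ‖ρ x * x‖ + x * ρ x * ∫ t in 0..x, |f' t| := by
        have hsign : |x| * |(∫ t in 0..x, |f' t|)| = x * ∫ t in 0..x, |f' t| := by
          rw [← abs_mul, abs_of_nonneg (mul_intervalIntegral_nonneg (fun t => abs_nonneg _) x)]
        rw [norm_mul, Real.norm_of_nonneg hρ, Real.norm_eq_abs]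
        linear_combination ρ x * hsign

/-- Stein's identity: the derivative of `ρ f` is `ρ f' - x ρ f`, and it integrates to zero. -/
theorem integral_id_mul_gaussianReal {f f' : ℝ → ℝ} (hf : ∀ x, HasDerivAt f (f' x) x)
    (hf' : Continuous f') (hfi : Integrable f (gaussianReal 0 1))
    (hf'i : Integrable f' (gaussianReal 0 1)) :
    ∫ x, x * f x ∂gaussianReal 0 1 = ∫ x, f' x ∂gaussianReal 0 1 := by
  have hxfi := integrable_id_mul_gaussianReal hf hf' hf'i
  rw [integrable_gaussianReal_iff one_ne_zero] at hfi hf'i hxfi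
  rw [integral_gaussianReal_eq_integral_smul one_ne_zero,
    integral_gaussianReal_eq_integral_smul one_ne_zero, eq_comm, ← sub_eq_zero,
    ← integral_sub hf'i hxfi]
  refine integral_eq_zero_of_hasDerivAt_of_integrable (f := fun x => ρ x • f x) (fun x => ?_)
    (hf'i.sub hxfi) hfi
  exact ((hasDerivAt_gaussianPDFReal_zero_one x).mul (hf x)).congr_deriv
    (by simp only [smul_eq_mul]; ring)

lemma derivative_hermite_succ (k : ℕ) :
    derivative (hermite (k + 1)) = (k + 1) • hermite k := by
  induction k with
  | zero => simp
  | succ m ih =>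
    rw [hermite_succ (m + 1), derivative_sub, derivative_mul, derivative_X, one_mul, ih,
      derivative_smul, mul_smul_comm, add_sub_assoc, ← smul_sub, ← hermite_succ m]
    simp only [add_nsmul, one_nsmul]
    abel

lemma aeval_derivative_hermite (m : ℕ) (x : ℝ) :
    aeval x (derivative (hermite m)) = m * aeval x (hermite (m - 1)) := by
  cases m with
  | zero => simp [hermite_zero]
  | succ k => rw [derivative_hermite_succ, nsmul_eq_mul, map_mul]; simp

lemma aeval_hermite_succ (m : ℕ) (x : ℝ) :
    aeval x (hermite (m + 1)) = x * aeval x (hermite m) - m * aeval x (hermite (m - 1)) := by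
  rw [hermite_succ, map_sub, map_mul, aeval_X, aeval_derivative_hermite]

lemma hasDerivAt_aeval_hermite (m : ℕ) (x : ℝ) :
    HasDerivAt (fun y => aeval y (hermite m)) (m * aeval x (hermite (m - 1))) x := by
  simpa only [aeval_derivative_hermite] using (hermite m).hasDerivAt_aeval x

lemma ContDiff.hasDerivAt_iteratedDeriv {n : ℕ} {φ : ℝ → ℝ} (hφ : ContDiff ℝ n φ) {j : ℕ}
    (hj : j < n) (x : ℝ) : HasDerivAt (iteratedDeriv j φ) (iteratedDeriv (j + 1) φ x) x := by
  rw [iteratedDeriv_succ]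
  exact ((hφ.differentiable_iteratedDeriv j (by exact_mod_cast hj)) x).hasDerivAt

theorem hermite_mul_iteratedDeriv_gaussianReal {n : ℕ} {φ : ℝ → ℝ} (hφ : ContDiff ℝ n φ)
    (hint : ∀ k ≤ n, Integrable (iteratedDeriv k φ) (gaussianReal 0 1)) {m j : ℕ}
    (hmj : m + j ≤ n) :
    Integrable (fun x => aeval x (hermite m) * iteratedDeriv j φ x) (gaussianReal 0 1) ∧
      ∫ x, aeval x (hermite m) * iteratedDeriv j φ x ∂gaussianReal 0 1 =
        ∫ x, iteratedDeriv (m + j) φ x ∂gaussianReal 0 1 := by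
  induction m using Nat.strong_induction_on generalizing j with
  | _ m ih =>
  rcases m with _ | k
  · simpa [hermite_zero] using hint j (by omega)
  obtain ⟨hFi, -⟩ := ih k (by omega) (j := j) (by omega)
  obtain ⟨hGi, -⟩ := ih (k - 1) (by omega) (j := j) (by omega)
  obtain ⟨hF'i, hF'eq⟩ := ih k (by omega) (j := j + 1) (by omega)
  set F := fun x => aeval x (hermite k) * iteratedDeriv j φ x
  set G := fun x => aeval x (hermite (k - 1)) * iteratedDeriv j φ x
  have hF : ∀ x, HasDerivAt F (k * G x + aeval x (hermite k) * iteratedDeriv (j + 1) φ x) x :=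
    fun x => ((hasDerivAt_aeval_hermite k x).mul
      (hφ.hasDerivAt_iteratedDeriv (by omega) x)).congr_deriv (by simp only [G]; ring)
  have hcont : ∀ i ≤ n, Continuous (iteratedDeriv i φ) := fun i hi =>
    hφ.continuous_iteratedDeriv i (by exact_mod_cast hi)
  have hF'c : Continuous fun x => k * G x + aeval x (hermite k) * iteratedDeriv (j + 1) φ x :=
    (continuous_const.mul ((hermite _).continuous_aeval.mul (hcont j (by omega)))).add
      ((hermite k).continuous_aeval.mul (hcont (j + 1) (by omega)))
  have hF'i' := (hGi.const_mul (k : ℝ)).add hF'i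
  have hxFi := integrable_id_mul_gaussianReal hF hF'c hF'i'
  have hrec : (fun x => aeval x (hermite (k + 1)) * iteratedDeriv j φ x) =
      fun x => x * F x - k * G x := by
    ext x; simp only [F, G, aeval_hermite_succ]; ring
  rw [hrec, integral_sub hxFi (hGi.const_mul _), integral_id_mul_gaussianReal hF hF'c hFi hF'i',
    integral_add (hGi.const_mul _) hF'i, hF'eq, show k + (j + 1) = k + 1 + j by omega]
  exact ⟨hxFi.sub (hGi.const_mul _), by ring⟩

lemma integrable_iteratedDeriv_const {μ : Measure ℝ} [IsFiniteMeasure μ] (k : ℕ) (c : ℝ) :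
    Integrable (iteratedDeriv k fun _ : ℝ => c) μ :=
  (integrable_const _).congr (ae_of_all _ fun _ => iteratedDeriv_const.symm)

lemma integrable_aeval_hermite_gaussianReal (m : ℕ) :
    Integrable (fun x => aeval x (hermite m)) (gaussianReal 0 1) := by
  simpa using (hermite_mul_iteratedDeriv_gaussianReal contDiff_const
    (fun k _ => integrable_iteratedDeriv_const k 1) (add_zero m).le).1

lemma integral_aeval_hermite_gaussianReal (m : ℕ) :
    ∫ x, aeval x (hermite m) ∂gaussianReal 0 1 = if m = 0 then 1 else 0 := by
  simpa [iteratedDeriv_const] using (hermite_mul_iteratedDeriv_gaussianReal contDiff_const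
    (fun k _ => integrable_iteratedDeriv_const k 1) (add_zero m).le).2

theorem hermite_fourier_coefficient_general (n : ℕ) (hn : 1 ≤ n) (c : ℝ) (hc : 0 < c)
    (φ : ℝ → ℝ) (hφ : ContDiff ℝ n φ)
    (h₃ : ∀ k ≤ n, Integrable (fun x => iteratedDeriv k φ x) (gaussianReal 0 1)) :
    bip (gaussianReal 0 1) (hermiteBasis n) (fun x => c * Real.exp (-(φ x))) =
      (Real.sqrt (Nat.factorial n))⁻¹ * ∫ x, iteratedDeriv n φ x ∂(gaussianReal 0 1) := by
  set s := Real.sqrt (Nat.factorial n)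
  have hH : ∫ x, aeval x (hermite n) ∂gaussianReal 0 1 = 0 := by
    rw [integral_aeval_hermite_gaussianReal, if_neg (by omega)]
  obtain ⟨hHφi, hHφ⟩ := hermite_mul_iteratedDeriv_gaussianReal hφ h₃ (add_zero n).le
  simp only [iteratedDeriv_zero, add_zero] at hHφi hHφ
  have hlog_h : ∀ x, log (hermiteBasis n x) = -s⁻¹ * aeval x (hermite n) := fun x => by
    rw [hermiteBasis, log_exp]; ring
  have hlog_p : ∀ x, log (c * exp (-φ x)) = log c - φ x := fun x => by
    rw [log_mul hc.ne' (exp_pos _).ne', log_exp]; ring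
  have hprod : ∀ x, log (hermiteBasis n x) * log (c * exp (-φ x)) =
      s⁻¹ * (aeval x (hermite n) * φ x) - s⁻¹ * log c * aeval x (hermite n) := fun x => by
    rw [hlog_h, hlog_p]; ring
  rw [bip, funext hprod, funext hlog_h,
    integral_sub (hHφi.const_mul _) ((integrable_aeval_hermite_gaussianReal n).const_mul _),
    integral_const_mul, integral_const_mul, integral_const_mul, hH, hHφ]
  ring

/-- **Hermite Fourier coefficients in Bayes space.**  For `p = c·exp (-φ)` in Bayes space with
standard normal measure, the Fourier coefficient w.r.t. the `n`-th exponentiated Hermite basis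
vector is `αₙ = ⟨hₙ, p⟩ = (1/√(n!))·E_ν[φ⁽ⁿ⁾]`. -/
theorem hermite_fourier_coefficient (n : ℕ) (hn : 1 ≤ n) (c : ℝ) (hc : 0 < c)
    (φ : ℝ → ℝ) (hφ : ContDiff ℝ n φ)
    (h₁ : Integrable (fun x => (Polynomial.aeval x (Polynomial.hermite n) : ℝ) * φ x)
      (gaussianReal 0 1))
    (h₂ : Integrable φ (gaussianReal 0 1))
    (h₃ : ∀ k ≤ n, Integrable (fun x => iteratedDeriv k φ x) (gaussianReal 0 1)) :
    bip (gaussianReal 0 1) (hermiteBasis n) (fun x => c * Real.exp (-(φ x))) =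
      (Real.sqrt (Nat.factorial n))⁻¹ * ∫ x, iteratedDeriv n φ x ∂(gaussianReal 0 1) :=
  hermite_fourier_coefficient_general n hn c hc φ hφ h₃
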